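/- arXiv:2506.20406 — 3 statements merged into one kernel-verified Lean document; each statement's English description precedes it below -/
import Mathlib

section
/- Let A be a finite nonempty set, let f, f' : A → ℝ, and let π = softmax(f) and π' = softmax(f'). Then for any probability distribution p on A, KL(p, π) − KL(p, π') − KL(π', π) = Σ_{a∈A} (f'(a) − f(a)) (p(a) − π'(a)). -/
/-- The soft-max distribution on a finite nonempty set associated with a score function `f`. -/
noncomputable def softmax {A : Type*} [Fintype A] (f : A → ℝ) : A → ℝ :=
  fun a => Real.exp (f a) / ∑ a', Real.exp (f a')

/-- The Kullback–Leibler divergence between two distributions on a finite set,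
with the convention `0 · log 0 = 0` (note `Real.log 0 = 0` in Mathlib). -/
noncomputable def klDiv {A : Type*} [Fintype A] (p q : A → ℝ) : ℝ :=
  ∑ a, p a * Real.log (p a / q a)

lemma softmax_sum_pos {A : Type*} [Fintype A] [Nonempty A] (f : A → ℝ) :
    0 < ∑ a', Real.exp (f a') :=
  Finset.sum_pos (fun _ _ => Real.exp_pos _) Finset.univ_nonempty

lemma softmax_log {A : Type*} [Fintype A] [Nonempty A] (f : A → ℝ) (a : A) :
    Real.log (softmax f a) = f a - Real.log (∑ a', Real.exp (f a')) := by
  unfold softmax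
  rw [Real.log_div (Real.exp_ne_zero _) (ne_of_gt (softmax_sum_pos f)), Real.log_exp]

lemma softmax_sum_one {A : Type*} [Fintype A] [Nonempty A] (f : A → ℝ) :
    ∑ a, softmax f a = 1 := by
  unfold softmax
  rw [← Finset.sum_div, div_self (ne_of_gt (softmax_sum_pos f))]

lemma klDiv_expand {A : Type*} [Fintype A] (q g : A → ℝ) (hq : ∀ a, 0 ≤ q a)
    (hg : ∀ a, g a ≠ 0) :
    klDiv q g = ∑ a, q a * Real.log (q a) - ∑ a, q a * Real.log (g a) := by
  unfold klDiv
  rw [← Finset.sum_sub_distrib]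
  refine Finset.sum_congr rfl fun a _ => ?_
  rcases eq_or_lt_of_le (hq a) with h | h
  · simp [← h]
  · rw [Real.log_div (ne_of_gt h) (hg a), mul_sub]

/-- Three-point KL identity for soft-max policies: for `π = softmax f`, `π' = softmax f'`, and
any probability distribution `p` on `A`,
`KL(p, π) − KL(p, π') − KL(π', π) = Σₐ (f'(a) − f(a)) (p(a) − π'(a))`. -/
theorem stmt_4 {A : Type*} [Fintype A] [Nonempty A] (f f' : A → ℝ)
    (p : A → ℝ) (hp0 : ∀ a, 0 ≤ p a) (hp1 : ∑ a, p a = 1) :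
    klDiv p (softmax f) - klDiv p (softmax f') - klDiv (softmax f') (softmax f)
      = ∑ a, (f' a - f a) * (p a - softmax f' a) := by
  have hπ : ∀ a, 0 < softmax f a := fun a => div_pos (Real.exp_pos _) (softmax_sum_pos f)
  have hπ' : ∀ a, 0 < softmax f' a := fun a => div_pos (Real.exp_pos _) (softmax_sum_pos f')
  rw [klDiv_expand p (softmax f) hp0 (fun a => ne_of_gt (hπ a)),
      klDiv_expand p (softmax f') hp0 (fun a => ne_of_gt (hπ' a)),
      klDiv_expand (softmax f') (softmax f) (fun a => le_of_lt (hπ' a))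
        (fun a => ne_of_gt (hπ a))]
  have key : ∀ a, (f' a - f a) * (p a - softmax f' a)
      = (p a * Real.log (softmax f' a) - p a * Real.log (softmax f a))
        - (softmax f' a * Real.log (softmax f' a) - softmax f' a * Real.log (softmax f a))
        + (Real.log (∑ a', Real.exp (f' a')) - Real.log (∑ a', Real.exp (f a')))
          * (p a - softmax f' a) := by
    intro a
    rw [softmax_log f a, softmax_log f' a]
    ring
  rw [Finset.sum_congr rfl (fun a _ => key a)]
  rw [Finset.sum_add_distrib, ← Finset.mul_sum]
  simp only [Finset.sum_sub_distrib]
  rw [hp1, softmax_sum_one f']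
  ring
end

section
/- Let A be a finite nonempty set, let f, Q, e : A → ℝ, and let η > 0. Let π = softmax(f) and π' = softmax(f + e + ηQ). Then Σ_{a∈A} Q(a) (π'(a) − π(a)) + (1/(4η)) · (max_{a∈A} |e(a)|)² ≥ 0. -/
open Real Finset

theorem Real.two_mul_sq_le_mul_log_sub_log {x : ℝ} (h : |x| < 1) :
    2 * x ^ 2 ≤ x * (log (1 + x) - log (1 - x)) := by
  have hsum := (hasSum_log_sub_log_of_abs_lt_one h).mul_left x
  have hterm : ∀ k : ℕ, x * (2 * (1 / (2 * k + 1)) * x ^ (2 * k + 1)) =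
      2 / (2 * k + 1) * x ^ (2 * (k + 1)) := fun k => by ring
  simp only [hterm] at hsum
  simpa using le_hasSum hsum 0 fun k _ =>
    mul_nonneg (by positivity) ((even_two_mul _).pow_nonneg x)

theorem Real.two_mul_sq_div_le_mul_log_sub_log {u v : ℝ} (hu : 0 < u) (hv : 0 < v) :
    2 * (u - v) ^ 2 / (u + v) ≤ (u - v) * (log u - log v) := by
  have huv : 0 < u + v := by linarith
  set x := (u - v) / (u + v) with hx
  have habs : |x| < 1 := by
    rw [abs_div, abs_of_pos huv, div_lt_one huv, abs_lt]; constructor <;> linarith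
  have hlog : log (1 + x) - log (1 - x) = log u - log v := by
    have h1 : 1 + x = 2 / (u + v) * u := by rw [hx]; field_simp; ring
    have h2 : 1 - x = 2 / (u + v) * v := by rw [hx]; field_simp; ring
    rw [h1, h2, log_mul (by positivity) hu.ne', log_mul (by positivity) hv.ne']
    ring
  have key := two_mul_sq_le_mul_log_sub_log habs
  rw [hlog] at key
  calc 2 * (u - v) ^ 2 / (u + v) = (u + v) * (2 * x ^ 2) := by rw [hx]; field_simp
    _ ≤ (u + v) * (x * (log u - log v)) := by gcongr
    _ = (u - v) * (log u - log v) := by rw [hx]; field_simp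

theorem sq_sum_abs_sub_le_sum_mul_log_sub_log {A : Type*} [Fintype A] {p q : A → ℝ}
    (hp : ∀ a, 0 < p a) (hq : ∀ a, 0 < q a) (hp1 : ∑ a, p a = 1) (hq1 : ∑ a, q a = 1) :
    (∑ a, |p a - q a|) ^ 2 ≤ ∑ a, (p a - q a) * (log (p a) - log (q a)) := by
  have hmid : ∑ a, (p a + q a) / 2 = 1 := by
    rw [← sum_div, sum_add_distrib, hp1, hq1]; norm_num
  calc (∑ a, |p a - q a|) ^ 2
      ≤ ∑ a, |p a - q a| ^ 2 / ((p a + q a) / 2) := by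
        simpa [hmid] using sq_sum_div_le_sum_sq_div univ (fun a => |p a - q a|)
          fun a _ => half_pos (add_pos (hp a) (hq a))
    _ = ∑ a, 2 * (p a - q a) ^ 2 / (p a + q a) := by
        congr! 1 with a; rw [sq_abs]; field_simp
    _ ≤ _ := sum_le_sum fun a _ => two_mul_sq_div_le_mul_log_sub_log (hp a) (hq a)

section Softmax

variable {A : Type*} [Fintype A]

theorem softmax_pos [Nonempty A] (f : A → ℝ) (a : A) : 0 < softmax f a := by
  unfold softmax; positivity

theorem sum_softmax [Nonempty A] (f : A → ℝ) : ∑ a, softmax f a = 1 := by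
  unfold softmax
  rw [← sum_div, div_self (by positivity)]

theorem log_softmax [Nonempty A] (f : A → ℝ) (a : A) :
    log (softmax f a) = f a - log (∑ a', exp (f a')) := by
  unfold softmax
  rw [log_div (exp_ne_zero _) (by positivity), log_exp]

theorem sum_softmax_sub_mul_log_softmax_sub [Nonempty A] (f g : A → ℝ) :
    ∑ a, (softmax g a - softmax f a) * (log (softmax g a) - log (softmax f a)) =
      ∑ a, (softmax g a - softmax f a) * (g a - f a) := by
  set c := log (∑ a', exp (g a')) - log (∑ a', exp (f a'))
  have hsum : ∑ a, (softmax g a - softmax f a) = 0 := by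
    rw [sum_sub_distrib, sum_softmax, sum_softmax, sub_self]
  calc _ = ∑ a, (softmax g a - softmax f a) * (g a - f a)
        - (∑ a, (softmax g a - softmax f a)) * c := by
        rw [sum_mul, ← sum_sub_distrib]
        congr! 1 with a; rw [log_softmax, log_softmax]; ring
    _ = _ := by rw [hsum, zero_mul, sub_zero]

theorem sq_sum_abs_softmax_sub_le [Nonempty A] (f g : A → ℝ) :
    (∑ a, |softmax g a - softmax f a|) ^ 2 ≤ ∑ a, (softmax g a - softmax f a) * (g a - f a) :=
  sum_softmax_sub_mul_log_softmax_sub f g ▸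
    sq_sum_abs_sub_le_sum_mul_log_sub_log (softmax_pos g) (softmax_pos f)
      (sum_softmax g) (sum_softmax f)

end Softmax

/-- For `π = softmax f` and `π' = softmax (f + e + η Q)` with `η > 0`,
`Σₐ Q(a) (π'(a) − π(a)) + (1/(4η)) (maxₐ |e(a)|)² ≥ 0`. -/
theorem stmt_5 {A : Type*} [Fintype A] [Nonempty A] (f Q e : A → ℝ) (η : ℝ) (hη : 0 < η) :
    0 ≤ (∑ a, Q a * (softmax (fun a => f a + e a + η * Q a) a - softmax f a))
        + 1 / (4 * η) * (Finset.univ.sup' Finset.univ_nonempty fun a => |e a|) ^ 2 := by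
  set d := fun a => softmax (fun a => f a + e a + η * Q a) a - softmax f a
  set M := univ.sup' univ_nonempty fun a => |e a|
  set t := ∑ a, |d a|
  have hl1 : t ^ 2 ≤ ∑ a, e a * d a + η * ∑ a, Q a * d a := by
    convert sq_sum_abs_softmax_sub_le f (fun a => f a + e a + η * Q a) using 1
    rw [mul_sum, ← sum_add_distrib]
    congr! 1 with a; ring
  have herr : ∑ a, e a * d a ≤ M * t := by
    rw [mul_sum]
    refine sum_le_sum fun a _ => ?_
    calc e a * d a ≤ |e a| * |d a| := by rw [← abs_mul]; exact le_abs_self _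
      _ ≤ M * |d a| := by gcongr; exact le_sup' (fun a => |e a|) (mem_univ a)
  have hbound : 0 ≤ η * ∑ a, Q a * d a + M ^ 2 / 4 := by nlinarith [sq_nonneg (t - M / 2)]
  calc (0 : ℝ) ≤ (η * ∑ a, Q a * d a + M ^ 2 / 4) / η := div_nonneg hbound hη.le
    _ = _ := by field_simp; ring
end

section
/- Let C > 0, σ > 0, and ω > 1, and let (μ_j)_{j≥1} be a sequence of nonnegative real numbers with μ_j ≤ C·j^{-ω} for all j ≥ 1. For each integer n ≥ 1, define the effective dimension d*(n) = min{ J ∈ ℕ, J ≥ 1 : J / Σ_{i=J+1}^∞ μ_i ≥ n/σ² } (with the convention that the condition holds when the tail sum is zero). Then d*(n) is well defined (the minimizing set is nonempty), and there exists a constant C'' > 0, depending only on C, σ, and ω, such that d*(n) ≤ C''·n^{1/ω} for all n ≥ 1. -/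
/-- The effective dimension of a nonnegative eigenvalue sequence at level `n/σ²`:
`d*(n) = min { J ≥ 1 : J / Σ_{i=J+1}^∞ μ_i ≥ n/σ² }`, with the convention that the condition
holds when the tail sum is zero. -/
noncomputable def effectiveDim (μ : ℕ → ℝ) (σ : ℝ) (n : ℕ) : ℕ :=
  sInf { J : ℕ | 1 ≤ J ∧
    ((∑' i : ℕ, μ (J + 1 + i)) = 0 ∨
      (n : ℝ) / σ ^ 2 ≤ (J : ℝ) / ∑' i : ℕ, μ (J + 1 + i)) }

/-!
The tail `Σ_{i>J} μ_i` is at most `C J^{1-ω}/(ω-1)` by comparison with `∫_J^∞ C x^{-ω} dx`.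
Hence any `J ≥ 1` with `J^ω ≥ C n / ((ω-1)σ²)` is admissible, and the least such integer,
`⌈(C n / ((ω-1)σ²))^{1/ω}⌉`, is at most `(C / ((ω-1)σ²))^{1/ω} n^{1/ω} + 1`.
-/

open Finset Real

def admissibleDims (μ : ℕ → ℝ) (σ : ℝ) (n : ℕ) : Set ℕ :=
  { J : ℕ | 1 ≤ J ∧
    ((∑' i : ℕ, μ (J + 1 + i)) = 0 ∨
      (n : ℝ) / σ ^ 2 ≤ (J : ℝ) / ∑' i : ℕ, μ (J + 1 + i)) }

theorem sum_range_rpow_neg_le {ω : ℝ} (hω : 1 < ω) {J : ℕ} (hJ : 0 < J) (a : ℕ) :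
    ∑ i ∈ range a, ((J + 1 + i : ℕ) : ℝ) ^ (-ω) ≤ (J : ℝ) ^ (1 - ω) / (ω - 1) := by
  have hJ' : (0 : ℝ) < J := by exact_mod_cast hJ
  have hanti : AntitoneOn (fun x : ℝ => x ^ (-ω)) (Set.Icc (J : ℝ) (J + a)) :=
    fun x hx y _ hxy => rpow_le_rpow_of_nonpos (hJ'.trans_le hx.1) hxy (by linarith)
  have h0 : (0 : ℝ) ∉ Set.uIcc (J : ℝ) (J + a) := by
    rw [Set.uIcc_of_le (by simp)]
    exact fun h => hJ'.not_ge h.1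
  have hint : ∫ x in (J : ℝ)..J + a, x ^ (-ω) =
      ((J : ℝ) ^ (1 - ω) - ((J : ℝ) + a) ^ (1 - ω)) / (ω - 1) := by
    rw [integral_rpow (Or.inr ⟨by linarith, h0⟩), show -ω + 1 = 1 - ω by ring,
      ← neg_div_neg_eq, neg_sub, neg_sub]
  calc ∑ i ∈ range a, ((J + 1 + i : ℕ) : ℝ) ^ (-ω)
      = ∑ i ∈ range a, ((J : ℝ) + (i + 1 : ℕ)) ^ (-ω) := by
        refine sum_congr rfl fun i _ => ?_
        push_cast; ring_nf
    _ ≤ ∫ x in (J : ℝ)..J + a, x ^ (-ω) := hanti.sum_le_integral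
    _ = ((J : ℝ) ^ (1 - ω) - ((J : ℝ) + a) ^ (1 - ω)) / (ω - 1) := hint
    _ ≤ (J : ℝ) ^ (1 - ω) / (ω - 1) := by
        gcongr
        exact sub_le_self _ (rpow_nonneg (by positivity) _)

theorem tsum_tail_le_of_le_rpow_neg {C ω : ℝ} (hC : 0 ≤ C) (hω : 1 < ω) {μ : ℕ → ℝ}
    (hμ0 : ∀ j, 1 ≤ j → 0 ≤ μ j) (hμ : ∀ j : ℕ, 1 ≤ j → μ j ≤ C * (j : ℝ) ^ (-ω))
    {J : ℕ} (hJ : 1 ≤ J) :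
    ∑' i : ℕ, μ (J + 1 + i) ≤ C * (J : ℝ) ^ (1 - ω) / (ω - 1) := by
  refine tsum_le_of_sum_range_le (fun i => hμ0 _ (by omega)) fun a => ?_
  calc ∑ i ∈ range a, μ (J + 1 + i)
      ≤ ∑ i ∈ range a, C * ((J + 1 + i : ℕ) : ℝ) ^ (-ω) :=
        sum_le_sum fun i _ => hμ _ (by omega)
    _ = C * ∑ i ∈ range a, ((J + 1 + i : ℕ) : ℝ) ^ (-ω) := (mul_sum ..).symm
    _ ≤ C * ((J : ℝ) ^ (1 - ω) / (ω - 1)) := by gcongr; exact sum_range_rpow_neg_le hω hJ a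
    _ = C * (J : ℝ) ^ (1 - ω) / (ω - 1) := (mul_div_assoc ..).symm

theorem mem_admissibleDims_of_mul_tsum_le {μ : ℕ → ℝ} {σ : ℝ} (hσ : σ ≠ 0) {n J : ℕ}
    (hJ : 1 ≤ J) (hT : 0 ≤ ∑' i : ℕ, μ (J + 1 + i))
    (h : n * ∑' i : ℕ, μ (J + 1 + i) ≤ J * σ ^ 2) : J ∈ admissibleDims μ σ n := by
  refine ⟨hJ, hT.eq_or_lt'.imp id fun hT => ?_⟩
  rwa [div_le_div_iff₀ (by positivity) hT]

theorem natCeil_rpow_inv_mem_admissibleDims {C σ ω : ℝ} (hC : 0 < C) (hσ : σ ≠ 0) (hω : 1 < ω)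
    {μ : ℕ → ℝ} (hμ0 : ∀ j, 1 ≤ j → 0 ≤ μ j) (hμ : ∀ j : ℕ, 1 ≤ j → μ j ≤ C * (j : ℝ) ^ (-ω))
    {n : ℕ} (hn : 1 ≤ n) :
    ⌈(C * n / ((ω - 1) * σ ^ 2)) ^ ω⁻¹⌉₊ ∈ admissibleDims μ σ n := by
  set a := C * n / ((ω - 1) * σ ^ 2) with ha_def
  set J := ⌈a ^ ω⁻¹⌉₊
  have ha : 0 < a := by
    have : (0 : ℝ) < n := by exact_mod_cast hn
    have : 0 < ω - 1 := by linarith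
    positivity
  have hJ : 1 ≤ J := Nat.one_le_iff_ne_zero.2 (Nat.ceil_pos.2 (by positivity)).ne'
  have hJ' : (0 : ℝ) < J := by exact_mod_cast hJ
  have ha_le : a ≤ (J : ℝ) ^ ω :=
    (rpow_inv_le_iff_of_pos ha.le hJ'.le (by linarith)).1 (Nat.le_ceil _)
  refine mem_admissibleDims_of_mul_tsum_le hσ hJ (tsum_nonneg fun i => hμ0 _ (by omega)) ?_
  calc n * ∑' i : ℕ, μ (J + 1 + i)
      ≤ n * (C * (J : ℝ) ^ (1 - ω) / (ω - 1)) :=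
        by gcongr; exact tsum_tail_le_of_le_rpow_neg hC.le hω hμ0 hμ hJ
    _ = a * σ ^ 2 * J / (J : ℝ) ^ ω := by
        rw [rpow_sub hJ', rpow_one]
        have : ω - 1 ≠ 0 := by linarith
        rw [ha_def]
        field_simp
    _ ≤ (J : ℝ) ^ ω * σ ^ 2 * J / (J : ℝ) ^ ω := by gcongr
    _ = J * σ ^ 2 := by field_simp

/-- If `0 ≤ μ_j ≤ C j^{-ω}` for all `j ≥ 1` with `ω > 1`, then the effective dimension
`d*(n)` is well defined (the minimizing set is nonempty) and there is a constant `C'' > 0`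
(depending only on `C`, `σ`, `ω`) such that `d*(n) ≤ C'' n^{1/ω}` for all `n ≥ 1`. -/
theorem stmt_15 (C σ ω : ℝ) (hC : 0 < C) (hσ : 0 < σ) (hω : 1 < ω)
    (μ : ℕ → ℝ) (hμ0 : ∀ j, 1 ≤ j → 0 ≤ μ j)
    (hμ : ∀ j : ℕ, 1 ≤ j → μ j ≤ C * (j : ℝ) ^ (-ω)) :
    (∀ n : ℕ, 1 ≤ n →
      { J : ℕ | 1 ≤ J ∧
        ((∑' i : ℕ, μ (J + 1 + i)) = 0 ∨
          (n : ℝ) / σ ^ 2 ≤ (J : ℝ) / ∑' i : ℕ, μ (J + 1 + i)) }.Nonempty) ∧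
    ∃ C'' > 0, ∀ n : ℕ, 1 ≤ n →
      (effectiveDim μ σ n : ℝ) ≤ C'' * (n : ℝ) ^ (1 / ω) := by
  have hmem := fun n (hn : 1 ≤ n) => natCeil_rpow_inv_mem_admissibleDims hC hσ.ne' hω hμ0 hμ hn
  refine ⟨fun n hn => ⟨_, hmem n hn⟩, ?_⟩
  set c := (C / ((ω - 1) * σ ^ 2)) ^ ω⁻¹
  have hc : 0 ≤ c := by
    have : 0 < ω - 1 := by linarith
    positivity
  refine ⟨c + 1, by positivity, fun n hn => ?_⟩
  have hn' : (1 : ℝ) ≤ (n : ℝ) ^ ω⁻¹ := one_le_rpow (by exact_mod_cast hn) (by positivity)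
  have hsplit : (C * n / ((ω - 1) * σ ^ 2)) ^ ω⁻¹ = c * (n : ℝ) ^ ω⁻¹ := by
    rw [mul_div_right_comm, mul_rpow (by positivity) n.cast_nonneg]
  rw [one_div]
  calc (effectiveDim μ σ n : ℝ)
      ≤ ⌈(C * n / ((ω - 1) * σ ^ 2)) ^ ω⁻¹⌉₊ := by exact_mod_cast Nat.sInf_le (hmem n hn)
    _ ≤ c * (n : ℝ) ^ ω⁻¹ + 1 := by
        rw [← hsplit]; exact (Nat.ceil_lt_add_one (by positivity)).le
    _ ≤ (c + 1) * (n : ℝ) ^ ω⁻¹ := by linarith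
end
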